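/- For three spinors z₁, z₂, z₃ ∈ ℂ² and three spinors w₁, w₂, w₃ ∈ ℂ², and complex parameters τ, τ' with the Gaussian integral convergent, ∫_{ℂ²} exp(τ Σ_{1≤i<j≤3} [z_i|z_j⟩[w_i|w_j⟩ − ττ' Σ_{i=1}^{3} ⟨z₄|z_i⟩[w_i|z₄⟩) dμ(z₄) = exp(τ Σ_{i<j≤3}[z_i|z_j⟩[w_i|w_j⟩) / (1 − ττ' Σ_{i=1}^{3} [z_i|w_i⟩ + τ²τ'² Σ_{1≤i<j≤3} [z_i|z_j⟩[w_i|w_j⟩). -/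

import Mathlib

/-!
Write `N = ∑ i, |z i⟩[w i|` for the `2 × 2` matrix with `⟨ζ|N ζ⟩ = ∑ i, ⟨ζ|z i⟩[w i|ζ⟩`. Then the
exponent is `C - ⟨ζ|(1 + ττ' N) ζ⟩`, and the smallness of `ττ'` makes this sesquilinear form
coercive. A complex Gaussian on `ℂ²` with coercive form `M` integrates to `π² / det M`: integrating
out the second coordinate is a one-variable complex Gaussian, and leaves a Gaussian in the first
coordinate whose coefficient is the Schur complement. Finally
`det (1 + t N) = 1 + t tr N + t² det N`, with `tr N = -∑ i, [z i|w i⟩` and, by Cauchy–Binet,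
`det N = ∑_{i<j} [z i|z j⟩[w i|w j⟩`.
-/

open MeasureTheory Real

/-- The holomorphic skew bracket `[x|y⟩ = x₀y₁ − x₁y₀` of two spinors in ℂ². -/
noncomputable def skb (x y : ℂ × ℂ) : ℂ := x.1 * y.2 - x.2 * y.1

/-- The Hermitian inner product `⟨x|y⟩ = conj(x₀)y₀ + conj(x₁)y₁` on ℂ². -/
noncomputable def herm (x y : ℂ × ℂ) : ℂ :=
  starRingEnd ℂ x.1 * y.1 + starRingEnd ℂ x.2 * y.2

open ComplexConjugate

theorem integral_cexp_conj_quadratic {a : ℂ} (ha : 0 < a.re) (b c : ℂ) :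
    ∫ u : ℂ, Complex.exp (b * conj u + c * u - a * (conj u * u))
      = π / a * Complex.exp (b * c / a) := by
  -- in real coordinates `u = x + i y` the integrand is a product of two real Gaussians
  have ha' : (-a).re < 0 := by simpa using ha
  set f : ℝ → ℂ := fun x ↦ Complex.exp (-a * x ^ 2 + (b + c) * x + 0)
  set g : ℝ → ℂ := fun y ↦ Complex.exp (-a * y ^ 2 + (c - b) * Complex.I * y + 0)
  have hsplit (p : ℝ × ℝ) :
      Complex.exp (b * conj (Complex.measurableEquivRealProd.symm p)
          + c * Complex.measurableEquivRealProd.symm p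
          - a * (conj (Complex.measurableEquivRealProd.symm p)
            * Complex.measurableEquivRealProd.symm p)) = f p.1 * g p.2 := by
    rw [← Complex.exp_add, Complex.measurableEquivRealProd_symm_apply, Complex.mk_eq_add_mul_I]
    simp only [map_add, map_mul, Complex.conj_ofReal, Complex.conj_I]
    congr 1
    linear_combination a * (p.2 : ℂ) ^ 2 * Complex.I_sq
  rw [← Complex.volume_preserving_equiv_real_prod.symm.integral_comp'
      (f := Complex.measurableEquivRealProd.symm), Measure.volume_eq_prod]
  simp_rw [hsplit]
  rw [integral_prod_mul f g, integral_cexp_quadratic ha', integral_cexp_quadratic ha', neg_neg,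
    mul_mul_mul_comm, ← Complex.exp_add, ← sq, one_div, Complex.cpow_ofNat_inv_pow]
  congr 2
  have ha0 : a ≠ 0 := by rintro rfl; simp at ha
  field_simp
  linear_combination (c - b) ^ 2 * Complex.I_sq

theorem integrable_cexp_neg_of_coercive {q : ℂ × ℂ → ℂ} (hq : Continuous q) {ε : ℝ} (hε : 0 < ε)
    (hcoer : ∀ ζ : ℂ × ℂ, ε * (‖ζ.1‖ ^ 2 + ‖ζ.2‖ ^ 2) ≤ (q ζ).re) :
    Integrable fun ζ ↦ Complex.exp (-q ζ) := by
  have hgauss : Integrable fun u : ℂ ↦ Real.exp (-ε * ‖u‖ ^ 2) := by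
    simpa [Complex.norm_exp, ← Complex.ofReal_pow] using
      (GaussianFourier.integrable_cexp_neg_mul_sq_norm_add (V := ℂ) (b := ε) (by simpa) 0 0).norm
  refine Integrable.mono' (Measure.volume_eq_prod ℂ ℂ ▸ hgauss.mul_prod hgauss) (by fun_prop)
    (.of_forall fun ζ ↦ ?_)
  rw [Complex.norm_exp, ← Real.exp_add, Real.exp_le_exp, Complex.neg_re]
  linarith [hcoer ζ]

theorem Finset.two_mul_sum_sum_Ioi {ι R : Type*} [Fintype ι] [LinearOrder ι]
    [LocallyFiniteOrderTop ι] [LocallyFiniteOrderBot ι] [CommRing R] {f : ι → ι → R}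
    (hsymm : ∀ i j, f i j = f j i) (hdiag : ∀ i, f i i = 0) :
    2 * ∑ i, ∑ j ∈ Finset.Ioi i, f i j = ∑ i, ∑ j, f i j := by
  classical
  have hpair (i : ι) : 2 * ∑ j ∈ Finset.Ioi i, f i j = ∑ j ∈ Finset.Ioi i, (f j i + f i j) := by
    rw [Finset.mul_sum]
    exact Finset.sum_congr rfl fun j _ ↦ by rw [hsymm j i]; ring
  rw [Finset.mul_sum]
  simp_rw [hpair, Finset.sum_sum_Ioi_add_eq_sum_sum_off_diag]
  refine (Finset.sum_congr rfl fun i _ ↦ ?_).trans Finset.sum_comm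
  rw [← Finset.sum_compl_add_sum {i}, Finset.sum_singleton, hdiag, add_zero]

theorem Matrix.det_one_add_smul_fin_two {R : Type*} [CommRing R] (M : Matrix (Fin 2) (Fin 2) R)
    (t : R) : (1 + t • M).det = 1 + t * M.trace + t ^ 2 * M.det := by
  simp only [Matrix.det_fin_two, Matrix.trace_fin_two, Matrix.add_apply, Matrix.smul_apply,
    Matrix.one_fin_two, Matrix.of_apply, Matrix.cons_val', Matrix.cons_val_zero,
    Matrix.cons_val_one, Matrix.empty_val', Matrix.cons_val_fin_one, smul_eq_mul]
  ring

def mulSpinor (M : Matrix (Fin 2) (Fin 2) ℂ) (ζ : ℂ × ℂ) : ℂ × ℂ :=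
  (M 0 0 * ζ.1 + M 0 1 * ζ.2, M 1 0 * ζ.1 + M 1 1 * ζ.2)

lemma herm_mulSpinor (M : Matrix (Fin 2) (Fin 2) ℂ) (ζ : ℂ × ℂ) :
    herm ζ (mulSpinor M ζ) = M 0 0 * (conj ζ.1 * ζ.1) + M 0 1 * (conj ζ.1 * ζ.2)
      + M 1 0 * (conj ζ.2 * ζ.1) + M 1 1 * (conj ζ.2 * ζ.2) := by
  simp only [herm, mulSpinor]; ring

lemma herm_self_re (x : ℂ × ℂ) : (herm x x).re = ‖x.1‖ ^ 2 + ‖x.2‖ ^ 2 := by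
  simp only [herm, Complex.add_re, ← Complex.normSq_eq_conj_mul_self, Complex.ofReal_re,
    Complex.normSq_eq_norm_sq]

lemma herm_mulSpinor_one_add_smul (M : Matrix (Fin 2) (Fin 2) ℂ) (t : ℂ) (ζ : ℂ × ℂ) :
    herm ζ (mulSpinor (1 + t • M) ζ) = herm ζ ζ + t * herm ζ (mulSpinor M ζ) := by
  rw [herm_mulSpinor, herm_mulSpinor, herm]
  simp only [Matrix.add_apply, Matrix.smul_apply, Matrix.one_fin_two, Matrix.of_apply,
    Matrix.cons_val', Matrix.cons_val_zero, Matrix.cons_val_one, Matrix.empty_val',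
    Matrix.cons_val_fin_one, smul_eq_mul]
  ring

theorem integral_cexp_neg_herm_mulSpinor (M : Matrix (Fin 2) (Fin 2) ℂ) {ε : ℝ} (hε : 0 < ε)
    (hM : ∀ ζ : ℂ × ℂ, ε * (‖ζ.1‖ ^ 2 + ‖ζ.2‖ ^ 2) ≤ (herm ζ (mulSpinor M ζ)).re) :
    ∫ ζ : ℂ × ℂ, Complex.exp (-herm ζ (mulSpinor M ζ)) = π ^ 2 / M.det := by
  have hd : 0 < (M 1 1).re := by
    have := hM (0, 1)
    norm_num [herm_mulSpinor] at this
    linarith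
  have hd0 : M 1 1 ≠ 0 := by rintro h; simp [h] at hd
  -- the Schur complement of `M 1 1` is the value of the form at `(1, -M 1 0 / M 1 1)`
  set s := M 0 0 - M 0 1 * M 1 0 / M 1 1
  have hs : 0 < s.re := by
    have h := hM (1, -M 1 0 / M 1 1)
    have hval : herm (1, -M 1 0 / M 1 1) (mulSpinor M (1, -M 1 0 / M 1 1)) = s := by
      rw [herm_mulSpinor]; simp only [map_one, s]; field_simp; ring
    rw [hval] at h
    exact lt_of_lt_of_le (by norm_num; positivity) h
  have hint : Integrable fun ζ : ℂ × ℂ ↦ Complex.exp (-herm ζ (mulSpinor M ζ)) :=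
    integrable_cexp_neg_of_coercive (by unfold herm mulSpinor; fun_prop) hε hM
  have hinner (u : ℂ) : ∫ v : ℂ, Complex.exp (-herm (u, v) (mulSpinor M (u, v)))
      = π / M 1 1 * Complex.exp (0 * conj u + 0 * u - s * (conj u * u)) := by
    have hsplit (v : ℂ) : Complex.exp (-herm (u, v) (mulSpinor M (u, v)))
        = Complex.exp (-(M 0 0 * (conj u * u))) * Complex.exp
          (-(M 1 0 * u) * conj v + -(M 0 1 * conj u) * v - M 1 1 * (conj v * v)) := by
      rw [← Complex.exp_add, herm_mulSpinor]; congr 1; ring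
    simp_rw [hsplit]
    rw [integral_const_mul, integral_cexp_conj_quadratic hd, mul_left_comm, ← Complex.exp_add]
    congr 2
    simp only [s]
    field_simp
    ring
  rw [Measure.volume_eq_prod, integral_prod _ hint]
  simp_rw [hinner]
  rw [integral_const_mul, integral_cexp_conj_quadratic hs, Matrix.det_fin_two]
  have hs0 : s ≠ 0 := by rintro h; simp [h] at hs
  simp only [s, mul_zero, zero_div, Complex.exp_zero, mul_one]
  field_simp

lemma norm_herm_le (x y : ℂ × ℂ) : ‖herm x y‖ ≤ (‖x.1‖ + ‖x.2‖) * ‖y‖ := by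
  refine (norm_add_le _ _).trans ?_
  simp only [norm_mul, Complex.norm_conj]
  nlinarith [norm_fst_le y, norm_snd_le y, norm_nonneg x.1, norm_nonneg x.2]

lemma norm_skb_le (y x : ℂ × ℂ) : ‖skb y x‖ ≤ (‖x.1‖ + ‖x.2‖) * ‖y‖ := by
  refine (norm_sub_le _ _).trans ?_
  simp only [norm_mul]
  nlinarith [norm_fst_le y, norm_snd_le y, norm_nonneg x.1, norm_nonneg x.2]

section Spinors

variable {ι : Type*} [Fintype ι] (z w : ι → ℂ × ℂ)

/-- The matrix of `ζ ↦ ∑ i, [w i|ζ⟩ • z i`, i.e. of `∑ i, |z i⟩[w i|`. -/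
noncomputable def spinorMatrix : Matrix (Fin 2) (Fin 2) ℂ :=
  !![-∑ i, (z i).1 * (w i).2, ∑ i, (z i).1 * (w i).1;
     -∑ i, (z i).2 * (w i).2, ∑ i, (z i).2 * (w i).1]

lemma herm_mulSpinor_spinorMatrix (ζ : ℂ × ℂ) :
    herm ζ (mulSpinor (spinorMatrix z w) ζ) = ∑ i, herm ζ (z i) * skb (w i) ζ := by
  simp only [herm_mulSpinor, spinorMatrix, Matrix.of_apply, Matrix.cons_val', Matrix.cons_val_zero,
    Matrix.cons_val_one, Matrix.empty_val', Matrix.cons_val_fin_one,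
    neg_mul, Finset.sum_mul, ← Finset.sum_neg_distrib, ← Finset.sum_add_distrib]
  refine Finset.sum_congr rfl fun i _ ↦ ?_
  simp only [herm, skb]; ring

lemma trace_spinorMatrix : (spinorMatrix z w).trace = -∑ i, skb (z i) (w i) := by
  simp only [Matrix.trace_fin_two, spinorMatrix, Matrix.of_apply, Matrix.cons_val',
    Matrix.cons_val_zero, Matrix.cons_val_one, Matrix.empty_val', Matrix.cons_val_fin_one, skb,
    Finset.sum_sub_distrib]
  ring

lemma det_spinorMatrix [LinearOrder ι] [LocallyFiniteOrderTop ι] [LocallyFiniteOrderBot ι] :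
    (spinorMatrix z w).det = ∑ i, ∑ j ∈ Finset.Ioi i, skb (z i) (z j) * skb (w i) (w j) := by
  have hexpand (i j : ι) : skb (z i) (z j) * skb (w i) (w j)
      = (z i).1 * (w i).1 * ((z j).2 * (w j).2) - (z i).1 * (w i).2 * ((z j).2 * (w j).1)
        - (z i).2 * (w i).1 * ((z j).1 * (w j).2) + (z i).2 * (w i).2 * ((z j).1 * (w j).1) := by
    simp only [skb]; ring
  have htwo : 2 * (spinorMatrix z w).det = ∑ i, ∑ j, skb (z i) (z j) * skb (w i) (w j) := by
    simp only [hexpand, Finset.sum_add_distrib, Finset.sum_sub_distrib, ← Finset.mul_sum,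
      ← Finset.sum_mul, Matrix.det_fin_two, spinorMatrix, Matrix.of_apply, Matrix.cons_val',
      Matrix.cons_val_zero, Matrix.cons_val_one, Matrix.empty_val', Matrix.cons_val_fin_one]
    ring
  rw [← Finset.two_mul_sum_sum_Ioi (fun i j ↦ by simp only [skb]; ring)
    (fun i ↦ by simp only [skb]; ring)] at htwo
  exact mul_left_cancel₀ two_ne_zero htwo

lemma norm_sum_herm_mul_skb_le (ζ : ℂ × ℂ) :
    ‖∑ i, herm ζ (z i) * skb (w i) ζ‖
      ≤ (∑ i, 2 * ‖z i‖ * ‖w i‖) * (‖ζ.1‖ ^ 2 + ‖ζ.2‖ ^ 2) := by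
  rw [Finset.sum_mul]
  refine (norm_sum_le _ _).trans (Finset.sum_le_sum fun i _ ↦ ?_)
  calc ‖herm ζ (z i) * skb (w i) ζ‖
      ≤ (‖ζ.1‖ + ‖ζ.2‖) * ‖z i‖ * ((‖ζ.1‖ + ‖ζ.2‖) * ‖w i‖) := by
        rw [norm_mul]
        exact mul_le_mul (norm_herm_le _ _) (norm_skb_le _ _) (norm_nonneg _) (by positivity)
    _ ≤ 2 * ‖z i‖ * ‖w i‖ * (‖ζ.1‖ ^ 2 + ‖ζ.2‖ ^ 2) := by
        have := mul_nonneg (norm_nonneg (z i)) (norm_nonneg (w i))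
        nlinarith [mul_nonneg this (sq_nonneg (‖ζ.1‖ - ‖ζ.2‖))]

lemma coercive_one_add_smul_spinorMatrix (t : ℂ) (ζ : ℂ × ℂ) :
    (1 - ‖t‖ * ∑ i, 2 * ‖z i‖ * ‖w i‖) * (‖ζ.1‖ ^ 2 + ‖ζ.2‖ ^ 2)
      ≤ (herm ζ (mulSpinor (1 + t • spinorMatrix z w) ζ)).re := by
  rw [herm_mulSpinor_one_add_smul, herm_mulSpinor_spinorMatrix, Complex.add_re, herm_self_re]
  have h := (neg_le_abs _).trans <| (Complex.abs_re_le_norm _).trans <|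
    ((norm_mul_le t _).trans (mul_le_mul_of_nonneg_left (norm_sum_herm_mul_skb_le z w ζ)
      (norm_nonneg t)))
  linarith

end Spinors

theorem stmt_17 (z w : Fin 3 → ℂ × ℂ) (τ τ' : ℂ)
    (hconv : ‖τ * τ'‖ * ∑ i : Fin 3, 2 * ‖z i‖ * ‖w i‖ < 1) :
    ∫ ζ : ℂ × ℂ,
      ((π : ℂ) ^ 2)⁻¹ *
        Complex.exp
          (τ * (∑ i : Fin 3, ∑ j ∈ Finset.Ioi i, skb (z i) (z j) * skb (w i) (w j))
            - τ * τ' * (∑ i : Fin 3, herm ζ (z i) * skb (w i) ζ)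
            - herm ζ ζ)
    = Complex.exp
        (τ * (∑ i : Fin 3, ∑ j ∈ Finset.Ioi i, skb (z i) (z j) * skb (w i) (w j))) /
      (1 - τ * τ' * (∑ i : Fin 3, skb (z i) (w i))
        + τ ^ 2 * τ' ^ 2 *
          (∑ i : Fin 3, ∑ j ∈ Finset.Ioi i, skb (z i) (z j) * skb (w i) (w j))) := by
  set S := ∑ i : Fin 3, ∑ j ∈ Finset.Ioi i, skb (z i) (z j) * skb (w i) (w j)
  set M := 1 + (τ * τ') • spinorMatrix z w
  have hexponent (ζ : ℂ × ℂ) :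
      τ * S - τ * τ' * (∑ i, herm ζ (z i) * skb (w i) ζ) - herm ζ ζ
        = τ * S + -herm ζ (mulSpinor M ζ) := by
    rw [herm_mulSpinor_one_add_smul, herm_mulSpinor_spinorMatrix]; ring
  have hdet : M.det = 1 - τ * τ' * (∑ i, skb (z i) (w i)) + τ ^ 2 * τ' ^ 2 * S := by
    rw [Matrix.det_one_add_smul_fin_two, trace_spinorMatrix, det_spinorMatrix]; ring
  simp_rw [hexponent, Complex.exp_add, ← mul_assoc]
  rw [integral_const_mul, integral_cexp_neg_herm_mulSpinor M (sub_pos.mpr hconv)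
    (coercive_one_add_smul_spinorMatrix z w _), hdet]
  field_simp
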